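/- arXiv:1109.5069 — 5 statements merged into one kernel-verified Lean document; each statement's English description precedes it below -/
import Mathlib

section
/- Let Ω̃ be any nonempty compact subset of ℝⁿ (n ≥ 2) and let δ > 0. Then the minimal unfolded region Uf(Ω̃ + δBⁿ) of the δ-parallel body Ω̃ + δBⁿ is contained in the convex hull of Ω̃. -/
/-!
Reflecting a point `y + u` (`y ∈ Ω`, `‖u‖ ≤ δ`) across a hyperplane `{⟪x, v⟫ = b}` that has
all of `Ω` on its other side does not increase its distance to `y`, so the reflected point stays
in `Ω + δBⁿ`. Hence `u_v(Ω + δBⁿ) ≤ M_v(Ω)` for every unit `v`, and `Uf(Ω + δBⁿ)` lies in every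
supporting half-space of `Ω`. Their intersection is the closed convex hull of `Ω`, which equals
the convex hull because, by Carathéodory, the hull of a compact set is compact.
-/

open MeasureTheory Pointwise RealInnerProductSpace

noncomputable section

/-- Reflection of `ℝⁿ` across the hyperplane `{x : ⟪x, v⟫ = b}`. -/
def ReflVB {n : ℕ} (v : EuclideanSpace ℝ (Fin n)) (b : ℝ)
    (x : EuclideanSpace ℝ (Fin n)) : EuclideanSpace ℝ (Fin n) :=
  x - (2 * (⟪x, v⟫ - b)) • v

/-- `M_v(Ω) = sup_{x ∈ Ω} x·v`. -/
def MV {n : ℕ} (Ω : Set (EuclideanSpace ℝ (Fin n)))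
    (v : EuclideanSpace ℝ (Fin n)) : ℝ :=
  sSup ((fun x => ⟪x, v⟫) '' Ω)

/-- `u_v(Ω)`. -/
def UV {n : ℕ} (Ω : Set (EuclideanSpace ℝ (Fin n)))
    (v : EuclideanSpace ℝ (Fin n)) : ℝ :=
  sInf {a : ℝ | a ≤ MV Ω v ∧
    ∀ b : ℝ, a ≤ b → b ≤ MV Ω v →
      ReflVB v b '' (Ω ∩ {x | b < ⟪x, v⟫}) ⊆ Ω}

/-- The minimal unfolded region of `Ω`. -/
def Uf {n : ℕ} (Ω : Set (EuclideanSpace ℝ (Fin n))) :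
    Set (EuclideanSpace ℝ (Fin n)) :=
  ⋂ v ∈ {v : EuclideanSpace ℝ (Fin n) | ‖v‖ = 1}, {x | ⟪x, v⟫ ≤ UV Ω v}

section ConvexHull

variable {E : Type*} [AddCommGroup E] [Module ℝ E] [FiniteDimensional ℝ E]

open Module in
/-- Carathéodory's theorem with a fixed number of points: padding the affinely independent
family by zero weights puts every point of the hull in the image of one standard simplex. -/
theorem exists_mem_stdSimplex_sum_smul_eq_of_mem_convexHull {s : Set E} {x : E}
    (hx : x ∈ convexHull ℝ s) :
    ∃ z : Fin (finrank ℝ E + 1) → E, (∀ i, z i ∈ s) ∧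
      ∃ w ∈ stdSimplex ℝ (Fin (finrank ℝ E + 1)), ∑ i, w i • z i = x := by
  classical
  obtain ⟨y₀, hy₀⟩ := convexHull_nonempty_iff.1 ⟨x, hx⟩
  obtain ⟨ι, _, z, w, hzs, hz, hw₀, hw₁, rfl⟩ := eq_pos_convex_span_of_mem_convexHull hx
  obtain ⟨e⟩ := Function.Embedding.nonempty_of_card_le
    ((hz.card_le_finrank_succ.trans (Nat.succ_le_succ (Submodule.finrank_le _))).trans_eq
      (Fintype.card_fin _).symm)
  have he := e.injective
  refine ⟨Function.extend e z fun _ => y₀, fun j => ?_,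
    Function.extend e w 0, ⟨fun j => ?_, ?_⟩, ?_⟩
  · by_cases hj : ∃ i, e i = j
    · obtain ⟨i, rfl⟩ := hj
      rw [he.extend_apply]
      exact hzs ⟨i, rfl⟩
    · rwa [Function.extend_apply' _ _ _ hj]
  · by_cases hj : ∃ i, e i = j
    · obtain ⟨i, rfl⟩ := hj
      rw [he.extend_apply]
      exact (hw₀ i).le
    · rw [Function.extend_apply' _ _ _ hj]
      rfl
  · rw [← hw₁]
    refine (Fintype.sum_of_injective e he _ _ (fun j hj => ?_) fun i => ?_).symm
    · exact Function.extend_apply' _ _ _ hj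
    · rw [he.extend_apply]
  · refine (Fintype.sum_of_injective e he _ _ (fun j hj => ?_) fun i => ?_).symm
    · rw [Function.extend_apply' _ _ _ hj, Pi.zero_apply, zero_smul]
    · rw [he.extend_apply, he.extend_apply]

variable [TopologicalSpace E] [ContinuousAdd E] [ContinuousSMul ℝ E]

open Module in
theorem IsCompact.convexHull {s : Set E} (hs : IsCompact s) :
    IsCompact (_root_.convexHull ℝ s) := by
  let N := finrank ℝ E + 1
  have hcont : Continuous fun p : (Fin N → E) × (Fin N → ℝ) => ∑ i, p.2 i • p.1 i := by
    fun_prop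
  have himage : _root_.convexHull ℝ s = (fun p : (Fin N → E) × (Fin N → ℝ) => ∑ i, p.2 i • p.1 i) ''
      ((Set.univ.pi fun _ => s) ×ˢ stdSimplex ℝ (Fin N)) := by
    refine subset_antisymm (fun x hx => ?_) ?_
    · obtain ⟨z, hzs, w, hw, rfl⟩ := exists_mem_stdSimplex_sum_smul_eq_of_mem_convexHull hx
      exact ⟨(z, w), ⟨fun i _ => hzs i, hw⟩, rfl⟩
    · rintro _ ⟨⟨z, w⟩, ⟨hzs, hw₀, hw₁⟩, rfl⟩
      exact (convex_convexHull ℝ s).sum_mem (fun i _ => hw₀ i) hw₁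
        fun i _ => subset_convexHull ℝ s (hzs i trivial)
  rw [himage]
  exact ((isCompact_univ_pi fun _ => hs).prod (isCompact_stdSimplex ℝ _)).image hcont

end ConvexHull

section Separation

variable {E : Type*} [NormedAddCommGroup E] [InnerProductSpace ℝ E] [FiniteDimensional ℝ E]

theorem mem_convexHull_of_forall_inner_le_sSup {K : Set E} (hne : K.Nonempty)
    (hK : IsCompact K) {p : E}
    (hp : ∀ v : E, ‖v‖ = 1 → ⟪p, v⟫ ≤ sSup ((fun x => ⟪x, v⟫) '' K)) :
    p ∈ convexHull ℝ K := by
  by_contra hpK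
  obtain ⟨f, r, hfr, hrp⟩ := geometric_hahn_banach_closed_point (convex_convexHull ℝ K)
    hK.convexHull.isClosed hpK
  set w := (InnerProductSpace.toDual ℝ E).symm f
  have hwf : ∀ x, ⟪w, x⟫ = f x := fun x => InnerProductSpace.toDual_symm_apply
  obtain ⟨y₀, hy₀⟩ := hne
  have hw : 0 < ‖w‖ := by
    refine norm_pos_iff.2 fun hw0 => ?_
    have hf : ∀ x, f x = 0 := fun x => by rw [← hwf, hw0, inner_zero_left]
    linarith [hfr y₀ (subset_convexHull ℝ K hy₀), hf y₀, hf p]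
  have hv : ‖‖w‖⁻¹ • w‖ = 1 := by
    rw [norm_smul, norm_inv, norm_norm, inv_mul_cancel₀ hw.ne']
  have hinner : ∀ x, ⟪x, ‖w‖⁻¹ • w⟫ = ‖w‖⁻¹ * f x := fun x => by
    rw [real_inner_smul_right, real_inner_comm, hwf]
  have hK_le : sSup ((fun x => ⟪x, ‖w‖⁻¹ • w⟫) '' K) ≤ ‖w‖⁻¹ * r := by
    refine csSup_le ⟨_, y₀, hy₀, rfl⟩ ?_
    rintro _ ⟨x, hx, rfl⟩
    dsimp only
    rw [hinner]
    exact mul_le_mul_of_nonneg_left (hfr x (subset_convexHull ℝ K hx)).le (by positivity)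
  have := (hp _ hv).trans hK_le
  rw [hinner] at this
  exact (mul_lt_mul_of_pos_left hrp (inv_pos.2 hw)).not_ge this

end Separation

section Unfolding

variable {n : ℕ} {v : EuclideanSpace ℝ (Fin n)}

theorem inner_reflVB (hv : ‖v‖ = 1) (b : ℝ) (x : EuclideanSpace ℝ (Fin n)) :
    ⟪ReflVB v b x, v⟫ = 2 * b - ⟪x, v⟫ := by
  rw [ReflVB, inner_sub_left, real_inner_smul_left, real_inner_self_eq_norm_sq, hv]
  ring

theorem dist_reflVB_le (hv : ‖v‖ = 1) {b : ℝ} {x y : EuclideanSpace ℝ (Fin n)}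
    (hx : b ≤ ⟪x, v⟫) (hy : ⟪y, v⟫ ≤ b) : dist (ReflVB v b x) y ≤ dist x y := by
  set t := ⟪x, v⟫ - b
  have hxy : t ≤ ⟪x - y, v⟫ := by rw [inner_sub_left]; linarith
  have hsq : ‖x - y - (2 * t) • v‖ ^ 2 = ‖x - y‖ ^ 2 - 4 * t * ⟪x - y, v⟫ + 4 * t ^ 2 := by
    rw [norm_sub_sq_real, real_inner_smul_right, norm_smul, hv, Real.norm_eq_abs, mul_one,
      sq_abs]
    ring
  have ht : 0 ≤ t := sub_nonneg.2 hx
  rw [dist_eq_norm, dist_eq_norm, ReflVB, sub_right_comm,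
    ← pow_le_pow_iff_left₀ (norm_nonneg _) (norm_nonneg _) two_ne_zero, hsq]
  nlinarith

theorem reflVB_image_add_closedBall_subset (hv : ‖v‖ = 1) {Ω : Set (EuclideanSpace ℝ (Fin n))}
    {b δ : ℝ} (hb : ∀ y ∈ Ω, ⟪y, v⟫ ≤ b) :
    ReflVB v b '' ((Ω + Metric.closedBall 0 δ) ∩ {x | b < ⟪x, v⟫}) ⊆
      Ω + Metric.closedBall 0 δ := by
  rintro _ ⟨_, ⟨⟨y, hy, u, hu, rfl⟩, hyu⟩, rfl⟩
  refine ⟨y, hy, ReflVB v b (y + u) - y, ?_, add_sub_cancel _ _⟩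
  rw [mem_closedBall_zero_iff, ← dist_eq_norm]
  calc dist (ReflVB v b (y + u)) y ≤ dist (y + u) y := dist_reflVB_le hv (le_of_lt hyu) (hb y hy)
    _ = ‖u‖ := by rw [dist_eq_norm, add_sub_cancel_left]
    _ ≤ δ := mem_closedBall_zero_iff.1 hu

theorem UV_le {Ω : Set (EuclideanSpace ℝ (Fin n))} (hne : Ω.Nonempty)
    (hbdd : BddBelow ((fun x => ⟪x, v⟫) '' Ω)) (hv : ‖v‖ = 1) {a : ℝ} (haM : a ≤ MV Ω v)
    (hrefl : ∀ b, a ≤ b → b ≤ MV Ω v → ReflVB v b '' (Ω ∩ {x | b < ⟪x, v⟫}) ⊆ Ω) :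
    UV Ω v ≤ a := by
  refine csInf_le ?_ ⟨haM, hrefl⟩
  obtain ⟨L, hL⟩ := hbdd
  obtain ⟨x₀, hx₀⟩ := hne
  have hLx₀ : L ≤ ⟪x₀, v⟫ := hL ⟨x₀, hx₀, rfl⟩
  refine ⟨L, fun a' ⟨ha'M, ha'⟩ => ?_⟩
  rcases le_or_gt ⟪x₀, v⟫ a' with h | h
  · exact hLx₀.trans h
  -- `L` is a lower bound: for `a' < ⟪x₀, v⟫` the reflection of `x₀` at level `a'` lies in `Ω`
  have hrx₀ : L ≤ ⟪ReflVB v a' x₀, v⟫ := hL ⟨_, ha' a' le_rfl ha'M ⟨x₀, ⟨hx₀, h⟩, rfl⟩, rfl⟩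
  rw [inner_reflVB hv] at hrx₀
  linarith

theorem UV_add_closedBall_le_MV {Ω : Set (EuclideanSpace ℝ (Fin n))} (hne : Ω.Nonempty)
    (hc : IsCompact Ω) {δ : ℝ} (hδ : 0 ≤ δ) (hv : ‖v‖ = 1) :
    UV (Ω + Metric.closedBall 0 δ) v ≤ MV Ω v := by
  have hcont : Continuous fun x : EuclideanSpace ℝ (Fin n) => ⟪x, v⟫ := by fun_prop
  have hc' := hc.add (isCompact_closedBall (0 : EuclideanSpace ℝ (Fin n)) δ)
  have hsub : Ω ⊆ Ω + Metric.closedBall 0 δ := fun y hy =>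
    ⟨y, hy, 0, Metric.mem_closedBall_self hδ, add_zero y⟩
  have hMM : MV Ω v ≤ MV (Ω + Metric.closedBall 0 δ) v :=
    csSup_le_csSup (hc'.image hcont).bddAbove (hne.image _) (Set.image_mono hsub)
  refine UV_le (hne.mono hsub) (hc'.image hcont).bddBelow hv hMM fun b hb _ => ?_
  exact reflVB_image_add_closedBall_subset hv fun y hy =>
    (le_csSup (hc.image hcont).bddAbove ⟨y, hy, rfl⟩).trans hb

end Unfolding

theorem stmt_3_general (n : ℕ) (Ω : Set (EuclideanSpace ℝ (Fin n)))
    (hne : Ω.Nonempty) (hc : IsCompact Ω) (δ : ℝ) (hδ : 0 < δ) :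
    Uf (Ω + Metric.closedBall (0 : EuclideanSpace ℝ (Fin n)) δ) ⊆
      convexHull ℝ Ω := fun _ hp =>
  mem_convexHull_of_forall_inner_le_sSup hne hc fun v hv =>
    (Set.mem_iInter₂.mp hp v hv).trans (UV_add_closedBall_le_MV hne hc hδ.le hv)

theorem stmt_3 (n : ℕ) (hn : 2 ≤ n) (Ω : Set (EuclideanSpace ℝ (Fin n)))
    (hne : Ω.Nonempty) (hc : IsCompact Ω) (δ : ℝ) (hδ : 0 < δ) :
    Uf (Ω + Metric.closedBall (0 : EuclideanSpace ℝ (Fin n)) δ) ⊆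
      convexHull ℝ Ω :=
  stmt_3_general n Ω hne hc δ hδ
end
end

section
/- Let 1 < α < 3 and a > 0. If 0 ≤ ξ ≤ a/2, then F(2, α, a, ξ) = ∫₀¹ ((a(1−t) − ξ)² + t²)^{(α−4)/2} (ξ − a(1−t)) dt < 0. -/
open intervalIntegral MeasureTheory

set_option maxHeartbeats 1000000 in
theorem stmt_5 (α a ξ : ℝ) (hα1 : 1 < α) (hα3 : α < 3) (ha : 0 < a)
    (hξ0 : 0 ≤ ξ) (hξ : ξ ≤ a / 2) :
    (∫ t in (0:ℝ)..1,
      ((a * (1 - t) - ξ) ^ 2 + t ^ 2) ^ ((α - 4) / 2) * (ξ - a * (1 - t))) < 0 := by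
  set p : ℝ := (α - 4) / 2 with hp
  have hpneg : p < 0 := by rw [hp]; linarith
  set f : ℝ → ℝ := fun t => ((a * (1 - t) - ξ) ^ 2 + t ^ 2) ^ p * (ξ - a * (1 - t)) with hf
  have hfa : ∀ t : ℝ, f t = ((a * (1 - t) - ξ) ^ 2 + t ^ 2) ^ p * (ξ - a * (1 - t)) := by
    intro t; rw [hf]
  have hξa : ξ < a := by linarith
  have hbase : ∀ t : ℝ, 0 < (a * (1 - t) - ξ) ^ 2 + t ^ 2 := by
    intro t
    rcases eq_or_ne t 0 with h | h
    · subst h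
      have : a * (1 - 0) - ξ ≠ 0 := by simp; linarith
      positivity
    · positivity
  have hfc : Continuous f := by
    rw [hf]
    apply Continuous.mul
    · apply Continuous.rpow_const (by continuity)
      intro t; exact Or.inl (ne_of_gt (hbase t))
    · continuity
  clear_value f
  clear_value p
  have hint : ∀ u v : ℝ, IntervalIntegrable f volume u v :=
    fun u v => hfc.intervalIntegrable u v
  set t₀ : ℝ := 1 - ξ / a with ht₀
  have ht₀a : a * t₀ = a - ξ := by rw [ht₀]; field_simp
  clear_value t₀
  have ht₀le : t₀ ≤ 1 := by nlinarith
  have ht₀half : 1 / 2 ≤ t₀ := by nlinarith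
  -- sign of f for t < t₀
  have hneg : ∀ t : ℝ, t < t₀ → f t < 0 := by
    intro t ht
    have hu : 0 < a * (1 - t) - ξ := by
      have : a * t < a * t₀ := (mul_lt_mul_iff_right₀ ha).2 ht
      nlinarith
    have h1 : 0 < ((a * (1 - t) - ξ) ^ 2 + t ^ 2) ^ p := Real.rpow_pos_of_pos (hbase t) _
    rw [hfa t]
    exact mul_neg_of_pos_of_neg h1 (by linarith)
  rcases eq_or_lt_of_le hξ0 with h0 | h0
  · -- ξ = 0 : f < 0 on (0,1)
    have ht01 : t₀ = 1 := by nlinarith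
    have hlt : (0:ℝ) < ∫ t in (0:ℝ)..1, -f t := by
      apply intervalIntegral_pos_of_pos_on ((hfc.neg).intervalIntegrable 0 1)
      · intro x hx
        have := hneg x (by rw [ht01]; exact hx.2)
        simpa using this
      · norm_num
    rw [intervalIntegral.integral_neg] at hlt
    linarith
  · -- ξ > 0 : t₀ < 1
    have ht₀lt : t₀ < 1 := by
      have : 0 < ξ / a := div_pos h0 ha
      nlinarith
    set c : ℝ := 2 * t₀ - 1 with hc
    clear_value c
    have hc0 : 0 ≤ c := by linarith
    have hct₀ : c < t₀ := by linarith
    have hrefl : ∀ t : ℝ, a * (1 - (2 * t₀ - t)) - ξ = -(a * (1 - t) - ξ) := by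
      intro t; nlinarith
    have hsplit : (∫ t in (0:ℝ)..1, f t) =
        (∫ t in (0:ℝ)..c, f t) + ((∫ t in c..t₀, f t) + ∫ t in t₀..(1:ℝ), f t) := by
      rw [integral_add_adjacent_intervals (hint c t₀) (hint t₀ 1),
        integral_add_adjacent_intervals (hint 0 c) (hint c 1)]
    have hsub : (∫ t in t₀..(1:ℝ), f t) = ∫ t in c..t₀, f (2 * t₀ - t) := by
      rw [intervalIntegral.integral_comp_sub_left f (2 * t₀)]
      have h1 : 2 * t₀ - t₀ = t₀ := by ring
      have h2 : 2 * t₀ - c = 1 := by rw [hc]; ring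
      rw [h1, h2]
    -- first piece nonpositive
    have hA : (∫ t in (0:ℝ)..c, f t) ≤ 0 := by
      have h' : (0:ℝ) ≤ ∫ t in (0:ℝ)..c, -f t := by
        apply intervalIntegral.integral_nonneg hc0
        intro x hx
        rcases eq_or_lt_of_le hx.2 with h | h
        · have := hneg x (h ▸ hct₀); linarith
        · have := hneg x (lt_trans h hct₀); linarith
      rw [intervalIntegral.integral_neg] at h'; linarith
    -- paired piece strictly negative
    have hB : (∫ t in c..t₀, (f t + f (2 * t₀ - t))) < 0 := by
      have h' : (0:ℝ) < ∫ t in c..t₀, -(f t + f (2 * t₀ - t)) := by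
        apply intervalIntegral_pos_of_pos_on
        · exact (Continuous.neg (hfc.add (hfc.comp (by continuity)))).intervalIntegrable c t₀
        · intro x hx
          obtain ⟨hx1, hx2⟩ := hx
          have hu : 0 < a * (1 - x) - ξ := by
            have : a * x < a * t₀ := (mul_lt_mul_iff_right₀ ha).2 hx2
            nlinarith
          have hx0 : 0 < x := lt_of_le_of_lt hc0 hx1
          have hxr : x < 2 * t₀ - x := by linarith
          have hsq : x ^ 2 < (2 * t₀ - x) ^ 2 := by nlinarith
          have hlt : ((a * (1 - (2 * t₀ - x)) - ξ) ^ 2 + (2 * t₀ - x) ^ 2) ^ p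
              < ((a * (1 - x) - ξ) ^ 2 + x ^ 2) ^ p := by
            apply Real.rpow_lt_rpow_of_neg (hbase x) _ hpneg
            rw [hrefl x]
            simp only [neg_sq]
            linarith
          have hval : ξ - a * (1 - (2 * t₀ - x)) = -(ξ - a * (1 - x)) := by
            have := hrefl x; linarith
          rw [hfa x, hfa (2 * t₀ - x), hval]
          have h2 : ξ - a * (1 - x) < 0 := by linarith
          nlinarith [Real.rpow_pos_of_pos (hbase x) p,
            Real.rpow_pos_of_pos (hbase (2 * t₀ - x)) p]
        · exact hct₀
      rw [intervalIntegral.integral_neg] at h'; linarith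
    have hBsplit : (∫ t in c..t₀, (f t + f (2 * t₀ - t))) =
        (∫ t in c..t₀, f t) + ∫ t in c..t₀, f (2 * t₀ - t) :=
      intervalIntegral.integral_add (hint c t₀)
        ((hfc.comp (by continuity)).intervalIntegrable c t₀)
    have hfinal : (∫ t in (0:ℝ)..1, f t) < 0 := by
      rw [hsplit, hsub]
      have := hBsplit
      linarith
    exact hfinal
end

section
/- Let n ≥ 3 be an integer and 1 < α < n + 1. For c > 0 define ψ_α(c) = 2 + 3/((1 + (4c² + 1)^{−(n+2−α)/2})^{1/(n−2)} − 1). Then for every c > 0 and every a ≥ ψ_α(c)·c one has ∫_{−a}^{c} (t − 1/a)(t + a)^{n−2} / (t² + 1)^{(n+2−α)/2} dt < 0. -/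
/-!
Write `β = (n + 2 - α) / 2`, `ε = (4c² + 1)^(-β) ∈ (0, 1]` and `m = (1 + ε)^(1/(n-2))`, so that
the hypothesis reads `3c ≤ (m - 1)(a - 2c)`. Split `[-a, c]` at `-2c` and `-c`. On `[-a, -2c]`
the integrand is `≤ 0`; on `[-2c, -c]` it is `≤ -c (a - 2c)^(n-2) ε`. On `[-c, c]` pairing `t`
with `-t` cancels the part of the integrand that is linear in `t`, leaving at most
`2(n-2)(a+c)^(n-3) t²`. Bernoulli's inequality gives `(n-2)(m-1) ≤ ε`, and `m^(n-2) = 1 + ε ≤ 2`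
gives `(a + c)^(n-3) ≤ 2 (a - 2c)^(n-3)`; with these the contribution of `[-2c, -c]` dominates.
-/

open intervalIntegral Real Set

theorem integral_neg_self_eq_integral_comp_neg_add {f : ℝ → ℝ} (hf : Continuous f) (c : ℝ) :
    ∫ x in (-c)..c, f x = ∫ x in (0 : ℝ)..c, (f (-x) + f x) := by
  rw [integral_add (f := fun x ↦ f (-x)) ((hf.comp continuous_neg).intervalIntegrable _ _)
      (hf.intervalIntegrable _ _), integral_comp_neg, neg_zero,
    integral_add_adjacent_intervals (hf.intervalIntegrable _ _) (hf.intervalIntegrable _ _)]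

noncomputable def weightedIntegrand (k : ℕ) (β a t : ℝ) : ℝ :=
  (t - 1 / a) * (t + a) ^ k / (t ^ 2 + 1) ^ β

section

variable {k : ℕ} {β a c t : ℝ}

theorem continuous_weightedIntegrand : Continuous (weightedIntegrand k β a) :=
  Continuous.div (by fun_prop)
    ((by fun_prop : Continuous fun t : ℝ ↦ t ^ 2 + 1).rpow_const fun t ↦ .inl (by positivity))
    fun t ↦ by positivity

theorem weightedIntegrand_nonpos (ha : 0 < a) (ht : t ∈ Icc (-a) 0) :
    weightedIntegrand k β a t ≤ 0 := by
  have hnum : (t - 1 / a) * (t + a) ^ k ≤ 0 :=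
    mul_nonpos_of_nonpos_of_nonneg (by linarith [ht.2, one_div_pos.2 ha])
      (pow_nonneg (by linarith [ht.1]) _)
  exact div_nonpos_of_nonpos_of_nonneg hnum (by positivity)

theorem weightedIntegrand_le_of_mem_Icc (hβ : 0 ≤ β) (ha : 0 < a) (hca : 2 * c ≤ a)
    (ht : t ∈ Icc (-(2 * c)) (-c)) :
    weightedIntegrand k β a t ≤ -(c * (a - 2 * c) ^ k * (4 * c ^ 2 + 1) ^ (-β)) := by
  obtain ⟨ht1, ht2⟩ := ht
  have hK : 0 ≤ c * (a - 2 * c) ^ k := mul_nonneg (by linarith) (pow_nonneg (by linarith) k)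
  have hnum : (t - 1 / a) * (t + a) ^ k ≤ -(c * (a - 2 * c) ^ k) := by
    have hpow : (a - 2 * c) ^ k ≤ (t + a) ^ k := pow_le_pow_left₀ (by linarith) (by linarith) _
    have ht' : t - 1 / a ≤ -c := by linarith [one_div_pos.2 ha]
    nlinarith [pow_nonneg (sub_nonneg.2 hca) k]
  have hden : (t ^ 2 + 1) ^ β ≤ (4 * c ^ 2 + 1) ^ β := by gcongr; nlinarith
  rw [rpow_neg (by positivity), ← div_eq_mul_inv, ← neg_div, weightedIntegrand,
    div_le_div_iff₀ (by positivity) (by positivity)]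
  nlinarith [mul_nonneg hK (sub_nonneg.2 hden),
    mul_nonneg (neg_nonneg.2 (sub_nonpos.2 hnum)) (by positivity : (0 : ℝ) ≤ (4 * c ^ 2 + 1) ^ β)]

theorem weightedIntegrand_comp_neg_add_le (hβ : 0 ≤ β) (ha : 0 < a) (hca : c ≤ a)
    (ht : |t| ≤ c) :
    weightedIntegrand (k + 1) β a (-t) + weightedIntegrand (k + 1) β a t ≤
      2 * (k + 1) * (a + c) ^ k * t ^ 2 := by
  obtain ⟨htl, htr⟩ := abs_le.1 ht
  have hB : 0 ≤ 2 * (k + 1) * (a + c) ^ k * t ^ 2 :=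
    mul_nonneg (mul_nonneg (by positivity) (pow_nonneg (by linarith) k)) (sq_nonneg t)
  have hmax : max |t + a| |-t + a| ≤ a + c :=
    max_le (abs_le.2 ⟨by linarith, by linarith⟩) (abs_le.2 ⟨by linarith, by linarith⟩)
  have hdiff : t * ((t + a) ^ (k + 1) - (-t + a) ^ (k + 1)) ≤
      2 * (k + 1) * (a + c) ^ k * t ^ 2 := calc
    _ ≤ |t| * |(t + a) ^ (k + 1) - (-t + a) ^ (k + 1)| := by
      rw [← abs_mul]; exact le_abs_self _
    _ ≤ |t| * (|(t + a) - (-t + a)| * (k + 1 : ℕ) * max |t + a| |-t + a| ^ k) := by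
      gcongr; exact abs_pow_sub_pow_le _ _ _
    _ ≤ |t| * (|2 * t| * (k + 1 : ℕ) * (a + c) ^ k) := by
      rw [show (t + a) - (-t + a) = 2 * t by ring]; gcongr
    _ = 2 * (k + 1) * (a + c) ^ k * t ^ 2 := by
      rw [abs_mul, abs_two]; push_cast
      linear_combination (2 * (k + 1) * (a + c) ^ k) * abs_mul_abs_self t
  have hsum : 0 ≤ 1 / a * ((-t + a) ^ (k + 1) + (t + a) ^ (k + 1)) :=
    mul_nonneg (by positivity)
      (add_nonneg (pow_nonneg (by linarith) _) (pow_nonneg (by linarith) _))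
  have hnum : (-t - 1 / a) * (-t + a) ^ (k + 1) + (t - 1 / a) * (t + a) ^ (k + 1) ≤
      2 * (k + 1) * (a + c) ^ k * t ^ 2 := by
    linarith [show (-t - 1 / a) * (-t + a) ^ (k + 1) + (t - 1 / a) * (t + a) ^ (k + 1)
      = t * ((t + a) ^ (k + 1) - (-t + a) ^ (k + 1))
        - 1 / a * ((-t + a) ^ (k + 1) + (t + a) ^ (k + 1)) by ring]
  rw [weightedIntegrand, weightedIntegrand, neg_sq, ← add_div]
  exact div_le_of_le_mul₀ (by positivity) hB
    (hnum.trans (le_mul_of_one_le_right hB (one_le_rpow (by nlinarith) hβ)))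

theorem integral_weightedIntegrand_le (hβ : 0 ≤ β) (hc : 0 < c) (hca : 2 * c ≤ a) :
    ∫ t in (-a)..c, weightedIntegrand (k + 1) β a t ≤
      -(c ^ 2 * (a - 2 * c) ^ (k + 1) * (4 * c ^ 2 + 1) ^ (-β)) +
        2 * (k + 1) * (a + c) ^ k * c ^ 3 / 3 := by
  have ha : 0 < a := by linarith
  have hF (p q : ℝ) :
      IntervalIntegrable (weightedIntegrand (k + 1) β a) MeasureTheory.volume p q :=
    continuous_weightedIntegrand.intervalIntegrable p q
  rw [← integral_add_adjacent_intervals (hF (-a) (-c)) (hF (-c) c),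
    ← integral_add_adjacent_intervals (hF (-a) (-(2 * c))) (hF _ (-c)),
    integral_neg_self_eq_integral_comp_neg_add continuous_weightedIntegrand]
  have hfar : ∫ t in (-a)..(-(2 * c)), weightedIntegrand (k + 1) β a t ≤ 0 := by
    simpa using integral_mono_on (by linarith) (hF _ _) intervalIntegrable_const
      fun t ht ↦ weightedIntegrand_nonpos ha ⟨ht.1, by linarith [ht.2]⟩
  have hmid : ∫ t in (-(2 * c))..(-c), weightedIntegrand (k + 1) β a t ≤
      -(c ^ 2 * (a - 2 * c) ^ (k + 1) * (4 * c ^ 2 + 1) ^ (-β)) :=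
    (integral_mono_on (by linarith) (hF _ _) intervalIntegrable_const
      fun t ht ↦ weightedIntegrand_le_of_mem_Icc hβ ha hca ht).trans_eq
      (by rw [integral_const, smul_eq_mul]; ring)
  have hnear : ∫ t in (0 : ℝ)..c,
      (weightedIntegrand (k + 1) β a (-t) + weightedIntegrand (k + 1) β a t) ≤
        2 * (k + 1) * (a + c) ^ k * c ^ 3 / 3 :=
    (integral_mono_on hc.le
      (((continuous_weightedIntegrand.comp continuous_neg).add
        continuous_weightedIntegrand).intervalIntegrable _ _)
      ((by fun_prop : Continuous fun t : ℝ ↦ 2 * (k + 1) * (a + c) ^ k * t ^ 2).intervalIntegrable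
        _ _)
      fun t ht ↦ weightedIntegrand_comp_neg_add_le hβ ha (by linarith)
        (abs_le.2 ⟨by linarith [ht.1], ht.2⟩)).trans_eq
      (by rw [integral_const_mul, integral_pow]; ring)
  linarith

end

theorem three_mul_le_sub_one_mul_sub {m c a : ℝ} (hm : 1 < m) (ha : (2 + 3 / (m - 1)) * c ≤ a) :
    3 * c ≤ (m - 1) * (a - 2 * c) := by
  rw [add_mul, div_mul_eq_mul_div, ← le_sub_iff_add_le', div_le_iff₀ (sub_pos.2 hm)] at ha
  linarith

theorem integral_weightedIntegrand_neg (k : ℕ) {β c a : ℝ} (hβ : 0 ≤ β) (hc : 0 < c)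
    (ha : (2 + 3 / ((1 + (4 * c ^ 2 + 1) ^ (-β)) ^ (1 / ((k : ℝ) + 1)) - 1)) * c ≤ a) :
    ∫ t in (-a)..c, weightedIntegrand (k + 1) β a t < 0 := by
  set ε := (4 * c ^ 2 + 1) ^ (-β)
  have hε : 0 < ε := by positivity
  have hε1 : ε ≤ 1 := rpow_le_one_of_one_le_of_nonpos (by nlinarith) (by linarith)
  set m := (1 + ε) ^ (1 / ((k : ℝ) + 1))
  have hm : 1 < m := one_lt_rpow (by linarith) (by positivity)
  have hm_pow : m ^ (k + 1) = 1 + ε := by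
    simpa [m, one_div] using
      rpow_inv_natCast_pow (x := 1 + ε) (n := k + 1) (by linarith) (by omega)
  have hm_le : (k + 1) * (m - 1) ≤ ε := by
    have := rpow_one_add_le_one_add_mul_self (s := ε) (p := 1 / ((k : ℝ) + 1)) (by linarith)
      (by positivity) (div_le_one_of_le₀ (by linarith [k.cast_nonneg (α := ℝ)]) (by positivity))
    rw [one_div_mul_eq_div, ← sub_le_iff_le_add', le_div_iff₀ (by positivity)] at this
    linarith
  have h3c := three_mul_le_sub_one_mul_sub hm ha
  have hsub : 0 < a - 2 * c := pos_of_mul_pos_right (a := m - 1) (by linarith) (by linarith)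
  have hpow : (a + c) ^ k ≤ 2 * (a - 2 * c) ^ k := calc
    (a + c) ^ k ≤ (m * (a - 2 * c)) ^ k := pow_le_pow_left₀ (by linarith) (by nlinarith) k
    _ = m ^ k * (a - 2 * c) ^ k := mul_pow _ _ _
    _ ≤ 2 * (a - 2 * c) ^ k := by
      gcongr
      calc m ^ k ≤ m ^ (k + 1) := pow_le_pow_right₀ hm.le k.le_succ
        _ ≤ 2 := by linarith
  have hεa : 3 * (k + 1) * c ≤ ε * (a - 2 * c) := by nlinarith
  have hP : 0 < (a - 2 * c) ^ k := pow_pos hsub k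
  have hdom : 2 * (k + 1) * (a + c) ^ k * c ^ 3 / 3 < c ^ 2 * (a - 2 * c) ^ (k + 1) * ε := calc
    _ ≤ 2 * (k + 1) * (2 * (a - 2 * c) ^ k) * c ^ 3 / 3 := by gcongr
    _ < c ^ 2 * (a - 2 * c) ^ k * (3 * (k + 1) * c) := by
      nlinarith [mul_pos (mul_pos (by positivity : (0 : ℝ) < k + 1) (pow_pos hc 3)) hP]
    _ ≤ c ^ 2 * (a - 2 * c) ^ k * (ε * (a - 2 * c)) := by gcongr
    _ = _ := by ring
  linarith [integral_weightedIntegrand_le (k := k) hβ hc (by linarith : 2 * c ≤ a)]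

theorem stmt_6_general (n : ℕ) (hn : 3 ≤ n) (α : ℝ) (hα : α < n + 1)
    (c : ℝ) (hc : 0 < c) (a : ℝ)
    (ha : (2 + 3 / ((1 + (4 * c ^ 2 + 1) ^ (-(((n : ℝ) + 2 - α) / 2))) ^
        (1 / ((n : ℝ) - 2)) - 1)) * c ≤ a) :
    (∫ t in (-a)..c,
      (t - 1 / a) * (t + a) ^ (n - 2) / (t ^ 2 + 1) ^ (((n : ℝ) + 2 - α) / 2)) < 0 := by
  obtain ⟨k, rfl⟩ : ∃ k, n = k + 3 := ⟨n - 3, by omega⟩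
  rw [show ((k + 3 : ℕ) : ℝ) - 2 = k + 1 by push_cast; ring] at ha
  exact integral_weightedIntegrand_neg k (by push_cast at hα ⊢; linarith) hc ha

theorem stmt_6 (n : ℕ) (hn : 3 ≤ n) (α : ℝ) (hα1 : 1 < α) (hα : α < n + 1)
    (c : ℝ) (hc : 0 < c) (a : ℝ)
    (ha : (2 + 3 / ((1 + (4 * c ^ 2 + 1) ^ (-(((n : ℝ) + 2 - α) / 2))) ^
        (1 / ((n : ℝ) - 2)) - 1)) * c ≤ a) :
    (∫ t in (-a)..c,
      (t - 1 / a) * (t + a) ^ (n - 2) / (t ^ 2 + 1) ^ (((n : ℝ) + 2 - α) / 2)) < 0 :=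
  stmt_6_general n hn α hα c hc a ha
end

section
/- Let n ≥ 3 be an integer and fix β > 0. For n < α < n + 1, let C₁(α) = {y ∈ ℝⁿ : Σ_{i=2}^{n} y_i² ≤ (n+1−α) y₁²} and X_{α,β} = Bⁿ ∪ (B^n_{1+1/β} ∩ C₁(α)), where Bⁿ and B^n_{1+1/β} are the closed balls of radius 1 and 1 + 1/β centered at the origin. Then there exists α₀ with n < α₀ < n + 1 such that for every α with α₀ ≤ α < n + 1: ∫_{X_{α,β}} |y|^{α−n−4} ( −(n+1−α) y₁² + Σ_{i=2}^{n} y_i² ) dy > 0. -/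
/-!
Write `δ = n + 1 - α` and `S y = ∑_{i ≥ 2} y_i²`, so the bracket is `S y - δ y₁²`. On the unit
ball the weight `|y|^(α-n-4)` is at least `1` and `|y|^(α-n-4) y₁² ≤ |y|^(-2)`, so the integrand is
at least `S y - δ |y|^(-2)`; since `n ≥ 3`, `|y|^(-2)` is integrable there. Outside the unit ball
the weight is at most `1` and the cone condition makes the bracket nonpositive, so the integrand is
at least `-δ (1 + 1/β)²`. Hence the integral is at least `∫_{Bⁿ} S - δ L` with `L` independent of
`α`, which is positive once `δ` is small.
-/

open MeasureTheory Metric Set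

section

variable {E : Type*} [NormedAddCommGroup E] [NormedSpace ℝ E] [FiniteDimensional ℝ E]
  [MeasurableSpace E] [BorelSpace E] {μ : Measure E} [μ.IsAddHaarMeasure]

lemma locallyIntegrable_norm_rpow_neg {s : ℝ} (hd : 1 ≤ Module.finrank ℝ E)
    (hs : s < Module.finrank ℝ E) : LocallyIntegrable (fun x : E => ‖x‖ ^ (-s)) μ :=
  locallyIntegrable_of_norm_le_rpow hd hs (C := 1)
    (ae_of_all _ fun x => by rw [one_mul, Real.norm_of_nonneg (by positivity)])
    (measurable_norm.pow_const _).aestronglyMeasurable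

end

lemma exists_pos_lt_one_mul_lt {c L : ℝ} (hc : 0 < c) (hL : 0 ≤ L) :
    ∃ ε : ℝ, 0 < ε ∧ ε < 1 ∧ ε * L < c := by
  refine ⟨c / (2 * c + L), by positivity, (div_lt_one (by positivity)).mpr (by linarith), ?_⟩
  rw [div_mul_eq_mul_div, div_lt_iff₀ (by positivity)]
  nlinarith

variable {ι : Type*} [Fintype ι] [DecidableEq ι]

def sqDistToAxis (i₀ : ι) (y : EuclideanSpace ℝ ι) : ℝ :=
  ∑ i ∈ Finset.univ \ {i₀}, y i ^ 2

lemma sq_add_sqDistToAxis (i₀ : ι) (y : EuclideanSpace ℝ ι) :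
    y i₀ ^ 2 + sqDistToAxis i₀ y = ‖y‖ ^ 2 := by
  rw [EuclideanSpace.real_norm_sq_eq, sqDistToAxis, Finset.sdiff_singleton_eq_erase,
    Finset.add_sum_erase _ (fun i => y i ^ 2) (Finset.mem_univ i₀)]

lemma sqDistToAxis_nonneg (i₀ : ι) (y : EuclideanSpace ℝ ι) : 0 ≤ sqDistToAxis i₀ y :=
  Finset.sum_nonneg fun _ _ => sq_nonneg _

lemma continuous_sqDistToAxis (i₀ : ι) : Continuous (sqDistToAxis i₀) := by
  unfold sqDistToAxis
  fun_prop

lemma setIntegral_sqDistToAxis_pos {i₀ i₁ : ι} (h : i₁ ≠ i₀) {r : ℝ} (hr : 0 < r) :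
    0 < ∫ y in closedBall (0 : EuclideanSpace ℝ ι) r, sqDistToAxis i₀ y := by
  have hcont := continuous_sqDistToAxis i₀
  rw [setIntegral_pos_iff_support_of_nonneg_ae (ae_of_all _ (sqDistToAxis_nonneg i₀))
    (hcont.continuousOn.integrableOn_compact (isCompact_closedBall 0 r))]
  set x := EuclideanSpace.single i₁ (r / 2)
  have hx : x ∈ Function.support (sqDistToAxis i₀) ∩ ball 0 r := by
    have hS := sq_add_sqDistToAxis i₀ x
    simp only [x, PiLp.single_apply, if_neg h.symm, PiLp.norm_single, Real.norm_eq_abs,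
      sq_abs] at hS
    refine ⟨?_, ?_⟩
    · rw [Function.mem_support]
      nlinarith
    · simp [x, abs_of_pos hr]
      linarith
  calc (0 : ENNReal) < volume (Function.support (sqDistToAxis i₀) ∩ ball 0 r) :=
        (hcont.isOpen_support.inter isOpen_ball).measure_pos volume ⟨x, hx⟩
    _ ≤ _ := measure_mono (inter_subset_inter_right _ ball_subset_closedBall)

noncomputable def axialIntegrand (i₀ : ι) (p δ : ℝ) (y : EuclideanSpace ℝ ι) : ℝ :=
  ‖y‖ ^ p * (-δ * y i₀ ^ 2 + sqDistToAxis i₀ y)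

section axialIntegrand

variable {i₀ : ι} {p δ R : ℝ} {y : EuclideanSpace ℝ ι}

lemma measurable_axialIntegrand : Measurable (axialIntegrand i₀ p δ) := by
  have := (continuous_sqDistToAxis i₀).measurable
  unfold axialIntegrand
  fun_prop

lemma sqDistToAxis_sub_le_axialIntegrand (hp : p ≤ 0) (hp4 : -4 ≤ p) (hδ : 0 ≤ δ)
    (hy : ‖y‖ ≤ 1) : sqDistToAxis i₀ y - δ * ‖y‖ ^ (-2 : ℝ) ≤ axialIntegrand i₀ p δ y := by
  rcases eq_or_ne y 0 with rfl | hy0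
  · simp [axialIntegrand, sqDistToAxis]
  have hpos : 0 < ‖y‖ := norm_pos_iff.mpr hy0
  have hS : sqDistToAxis i₀ y ≤ ‖y‖ ^ p * sqDistToAxis i₀ y :=
    le_mul_of_one_le_left (sqDistToAxis_nonneg i₀ y)
      (Real.one_le_rpow_of_pos_of_le_one_of_nonpos hpos hy hp)
  have hcoord : ‖y‖ ^ p * y i₀ ^ 2 ≤ ‖y‖ ^ (-2 : ℝ) := calc
    ‖y‖ ^ p * y i₀ ^ 2 ≤ ‖y‖ ^ p * ‖y‖ ^ (2 : ℝ) := by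
      rw [Real.rpow_two, ← sq_add_sqDistToAxis i₀ y]
      gcongr
      linarith [sqDistToAxis_nonneg i₀ y]
    _ = ‖y‖ ^ (p + 2) := (Real.rpow_add hpos _ _).symm
    _ ≤ ‖y‖ ^ (-2 : ℝ) := Real.rpow_le_rpow_of_exponent_ge hpos hy (by linarith)
  unfold axialIntegrand
  nlinarith [mul_le_mul_of_nonneg_left hcoord hδ]

lemma neg_mul_sq_le_axialIntegrand (hp : p ≤ 0) (hδ : 0 ≤ δ) (hy1 : 1 ≤ ‖y‖) (hyR : ‖y‖ ≤ R)
    (hcone : sqDistToAxis i₀ y ≤ δ * y i₀ ^ 2) : -(δ * R ^ 2) ≤ axialIntegrand i₀ p δ y := by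
  have hneg : -δ * y i₀ ^ 2 + sqDistToAxis i₀ y ≤ 0 := by linarith
  have hR : y i₀ ^ 2 ≤ R ^ 2 := calc
    y i₀ ^ 2 ≤ ‖y‖ ^ 2 := by linarith [sq_add_sqDistToAxis i₀ y, sqDistToAxis_nonneg i₀ y]
    _ ≤ R ^ 2 := pow_le_pow_left₀ (norm_nonneg y) hyR 2
  calc -(δ * R ^ 2) ≤ -δ * y i₀ ^ 2 + sqDistToAxis i₀ y := by
        nlinarith [sqDistToAxis_nonneg i₀ y]
    _ ≤ ‖y‖ ^ p * (-δ * y i₀ ^ 2 + sqDistToAxis i₀ y) := by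
        nlinarith [mul_le_mul_of_nonpos_right (Real.rpow_le_one_of_one_le_of_nonpos hy1 hp) hneg]

lemma norm_axialIntegrand_le (hδ0 : 0 ≤ δ) (hδ1 : δ ≤ 1) :
    ‖axialIntegrand i₀ p δ y‖ ≤ ‖y‖ ^ (p + 2) := by
  rcases eq_or_ne y 0 with rfl | hy0
  · simp only [axialIntegrand, sqDistToAxis]
    simp
    positivity
  have hpos : 0 < ‖y‖ := norm_pos_iff.mpr hy0
  have hnorm := sq_add_sqDistToAxis i₀ y
  have hS := sqDistToAxis_nonneg i₀ y
  rw [axialIntegrand, norm_mul, Real.norm_of_nonneg (by positivity), Real.rpow_add hpos,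
    Real.rpow_two, Real.norm_eq_abs]
  gcongr
  rw [abs_le]
  constructor <;> nlinarith [sq_nonneg (y i₀)]

lemma locallyIntegrable_axialIntegrand [Nonempty ι] (hp : -(Fintype.card ι : ℝ) < p + 2)
    (hδ0 : 0 ≤ δ) (hδ1 : δ ≤ 1) : LocallyIntegrable (axialIntegrand i₀ p δ) volume := by
  refine locallyIntegrable_of_norm_le_rpow (C := 1) (α := -(p + 2)) ?_ ?_
    (ae_of_all _ fun y => ?_) measurable_axialIntegrand.aestronglyMeasurable
  · rw [finrank_euclideanSpace]
    exact Fintype.card_pos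
  · rw [finrank_euclideanSpace]
    linarith
  · rw [one_mul, neg_neg]
    exact norm_axialIntegrand_le hδ0 hδ1

lemma sub_mul_le_setIntegral_axialIntegrand (hι : 3 ≤ Fintype.card ι) (i₀ : ι) (R : ℝ)
    (hp : p ≤ 0) (hp4 : -4 ≤ p) (hδ0 : 0 ≤ δ) (hδ1 : δ ≤ 1) :
    (∫ y in closedBall (0 : EuclideanSpace ℝ ι) 1, sqDistToAxis i₀ y) -
        δ * ((∫ y in closedBall (0 : EuclideanSpace ℝ ι) 1, ‖y‖ ^ (-2 : ℝ)) +
          R ^ 2 * volume.real (closedBall (0 : EuclideanSpace ℝ ι) R)) ≤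
      ∫ y in closedBall 0 1 ∪ (closedBall 0 R ∩ {y | sqDistToAxis i₀ y ≤ δ * y i₀ ^ 2}),
        axialIntegrand i₀ p δ y := by
  have : Nonempty ι := Fintype.card_pos_iff.mp (by omega)
  have hcard : (3 : ℝ) ≤ Fintype.card ι := by exact_mod_cast hι
  set B := closedBall (0 : EuclideanSpace ℝ ι) 1
  set A := closedBall (0 : EuclideanSpace ℝ ι) R ∩ {y | sqDistToAxis i₀ y ≤ δ * y i₀ ^ 2}
  have hA : IsCompact A := (isCompact_closedBall 0 R).inter_right
    (isClosed_le (continuous_sqDistToAxis i₀) (by fun_prop))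
  have hAB : MeasurableSet (A \ B) := hA.isClosed.measurableSet.diff measurableSet_closedBall
  have hf : IntegrableOn (axialIntegrand i₀ p δ) (B ∪ A) :=
    (locallyIntegrable_axialIntegrand (by linarith) hδ0 hδ1).integrableOn_isCompact
      ((isCompact_closedBall 0 1).union hA)
  have hSint : IntegrableOn (sqDistToAxis i₀) B :=
    (continuous_sqDistToAxis i₀).continuousOn.integrableOn_compact (isCompact_closedBall 0 1)
  have hRint : IntegrableOn (fun y : EuclideanSpace ℝ ι => ‖y‖ ^ (-2 : ℝ)) B :=
    (locallyIntegrable_norm_rpow_neg (by simp; omega) (by simp; linarith)).integrableOn_isCompact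
      (isCompact_closedBall 0 1)
  have hball : (∫ y in B, sqDistToAxis i₀ y) - δ * ∫ y in B, ‖y‖ ^ (-2 : ℝ) ≤
      ∫ y in B, axialIntegrand i₀ p δ y := by
    rw [← integral_const_mul, ← integral_sub hSint (hRint.const_mul δ)]
    exact setIntegral_mono_on (hSint.sub (hRint.const_mul δ)) (hf.mono_set subset_union_left)
      measurableSet_closedBall fun y hy =>
        sqDistToAxis_sub_le_axialIntegrand hp hp4 hδ0 (mem_closedBall_zero_iff.mp hy)
  have hcone : -(δ * R ^ 2) * volume.real (closedBall (0 : EuclideanSpace ℝ ι) R) ≤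
      ∫ y in A \ B, axialIntegrand i₀ p δ y := calc
    _ ≤ -(δ * R ^ 2) * volume.real (A \ B) :=
      mul_le_mul_of_nonpos_left
        (measureReal_mono (sdiff_subset.trans inter_subset_left) measure_closedBall_lt_top.ne)
        (by nlinarith [sq_nonneg R])
    _ ≤ _ := by
      refine setIntegral_ge_of_const_le_real hAB
        ((measure_mono sdiff_subset).trans_lt hA.measure_lt_top).ne
        (fun y ⟨⟨hyR, hyC⟩, hyB⟩ => ?_) (hf.mono_set (sdiff_subset.trans subset_union_right))
      exact neg_mul_sq_le_axialIntegrand hp hδ0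
        (not_le.mp (hyB ∘ mem_closedBall_zero_iff.mpr)).le (mem_closedBall_zero_iff.mp hyR) hyC
  rw [← union_sdiff_self, setIntegral_union disjoint_sdiff_right hAB
    (hf.mono_set subset_union_left) (hf.mono_set (sdiff_subset.trans subset_union_right))]
  linarith

end axialIntegrand

theorem stmt_17 (n : ℕ) (hn : 3 ≤ n) (β : ℝ) :
    ∃ α₀ : ℝ, (n : ℝ) < α₀ ∧ α₀ < n + 1 ∧
      ∀ α : ℝ, α₀ ≤ α → α < n + 1 →
        0 < ∫ y in
            (Metric.closedBall (0 : EuclideanSpace ℝ (Fin n)) 1 ∪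
              (Metric.closedBall (0 : EuclideanSpace ℝ (Fin n)) (1 + 1 / β) ∩
                {y : EuclideanSpace ℝ (Fin n) |
                  ∑ i ∈ Finset.univ \ {(⟨0, by omega⟩ : Fin n)}, (y i) ^ 2 ≤
                    ((n : ℝ) + 1 - α) * (y (⟨0, by omega⟩ : Fin n)) ^ 2})),
          ‖y‖ ^ (α - n - 4) *
            (-(((n : ℝ) + 1 - α)) * (y (⟨0, by omega⟩ : Fin n)) ^ 2 +
              ∑ i ∈ Finset.univ \ {(⟨0, by omega⟩ : Fin n)}, (y i) ^ 2) := by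
  set i₀ : Fin n := ⟨0, by omega⟩
  set R := 1 + 1 / β
  set c := ∫ y in closedBall (0 : EuclideanSpace ℝ (Fin n)) 1, sqDistToAxis i₀ y
  set L := (∫ y in closedBall (0 : EuclideanSpace ℝ (Fin n)) 1, ‖y‖ ^ (-2 : ℝ)) +
    R ^ 2 * volume.real (closedBall (0 : EuclideanSpace ℝ (Fin n)) R)
  have hc : 0 < c := setIntegral_sqDistToAxis_pos (i₁ := ⟨1, by omega⟩)
    (by simp [i₀, Fin.ext_iff]) one_pos
  have hL : 0 ≤ L := add_nonneg
    (setIntegral_nonneg measurableSet_closedBall fun _ _ => by positivity) (by positivity)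
  obtain ⟨ε, hε0, hε1, hεL⟩ := exists_pos_lt_one_mul_lt hc hL
  refine ⟨n + 1 - ε, by linarith, by linarith, fun α hα hα' => ?_⟩
  have hδL : (n + 1 - α) * L < c := (mul_le_mul_of_nonneg_right (by linarith) hL).trans_lt hεL
  exact (sub_pos.mpr hδL).trans_le (sub_mul_le_setIntegral_axialIntegrand (by simpa using hn) i₀ R
    (by linarith) (by linarith) (by linarith) (by linarith))
end

section
/- Let n ≥ 2 be an integer, let Ω ⊂ ℝⁿ be a compact set with nonempty interior, and let α ≥ n + 1. Then the function V_Ω^{(α)}(x) = ∫_Ω |x − y|^{α−n} dy attains its minimum over ℝⁿ at exactly one point; i.e. Ω has a unique r^{α−n}-center. -/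
/-!
For `p = α - n ≥ 1` the potential `V(x) = ∫_Ω ‖x - y‖ ^ p dy` is continuous and grows like
`‖x‖ ^ p`, so it attains its minimum. It is convex, being an integral of the convex functions
`x ↦ ‖x - y‖ ^ p`. It is even strictly convex: for `x₁ ≠ x₂`, strict convexity of the Euclidean
norm makes the inequality `‖a x₁ + b x₂ - y‖ ^ p ≤ a ‖x₁ - y‖ ^ p + b ‖x₂ - y‖ ^ p` strict for
every `y` off the line through `x₁` and `x₂`. Since `n ≥ 2` that line is Lebesgue-null while `Ω`
has positive measure, so the integrated inequality is strict too, and a strictly convex function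
has at most one minimizer.
-/

open MeasureTheory Filter Set

section Module

variable {V : Type*} [AddCommGroup V] [Module ℝ V]

lemma mem_affineSpan_pair_of_sameRay_sub {x₁ x₂ y : V} (h : SameRay ℝ (x₁ - y) (x₂ - y))
    (hx : x₁ ≠ x₂) : y ∈ line[ℝ, x₁, x₂] := by
  obtain ⟨u, a, b, -, -, -, h₁, h₂⟩ := h.exists_eq_smul
  have hcol : Collinear ℝ ({y, x₁, x₂} : Set V) := by
    rw [collinear_iff_of_mem (mem_insert y _)]
    refine ⟨u, ?_⟩
    rintro z (rfl | rfl | rfl)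
    · exact ⟨0, by simp⟩
    · exact ⟨a, by rw [vadd_eq_add, ← h₁, sub_add_cancel]⟩
    · exact ⟨b, by rw [vadd_eq_add, ← h₂, sub_add_cancel]⟩
  exact hcol.mem_affineSpan_of_mem_of_ne (by simp) (by simp) (by simp) hx

lemma affineSpan_pair_ne_top (hE : 2 ≤ Module.finrank ℝ V) (x₁ x₂ : V) :
    line[ℝ, x₁, x₂] ≠ ⊤ := by
  intro htop
  have hspan : vectorSpan ℝ ({x₁, x₂} : Set V) = ⊤ := by
    rw [← direction_affineSpan, htop, AffineSubspace.direction_top]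
  have : FiniteDimensional ℝ V := Module.finite_of_finrank_pos (by omega)
  have := (collinear_iff_finrank_le_one (k := ℝ)).1 (collinear_pair ℝ x₁ x₂)
  rw [hspan, finrank_top] at this
  omega

lemma smul_add_smul_sub_eq {a b : ℝ} (hab : a + b = 1) (x₁ x₂ y : V) :
    a • x₁ + b • x₂ - y = a • (x₁ - y) + b • (x₂ - y) := by
  rw [smul_sub, smul_sub, sub_add_sub_comm, ← add_smul, hab, one_smul]

end Module

section Norm

variable {E : Type*} [NormedAddCommGroup E] [NormedSpace ℝ E] {p : ℝ}

lemma convexOn_norm_sub_rpow (hp : 1 ≤ p) (y : E) :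
    ConvexOn ℝ univ (fun x : E => ‖x - y‖ ^ p) := by
  refine ⟨convex_univ, fun x₁ _ x₂ _ a b ha hb hab => ?_⟩
  have hnorm : ‖a • x₁ + b • x₂ - y‖ ≤ a * ‖x₁ - y‖ + b * ‖x₂ - y‖ := by
    rw [smul_add_smul_sub_eq hab]
    refine (norm_add_le _ _).trans_eq ?_
    rw [norm_smul, norm_smul, Real.norm_of_nonneg ha, Real.norm_of_nonneg hb]
  calc ‖a • x₁ + b • x₂ - y‖ ^ p ≤ (a * ‖x₁ - y‖ + b * ‖x₂ - y‖) ^ p :=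
        Real.rpow_le_rpow (norm_nonneg _) hnorm (by linarith)
    _ ≤ a • ‖x₁ - y‖ ^ p + b • ‖x₂ - y‖ ^ p :=
        (convexOn_rpow hp).2 (norm_nonneg _) (norm_nonneg _) ha hb hab

variable [StrictConvexSpace ℝ E]

lemma norm_smul_add_smul_sub_rpow_lt (hp : 1 ≤ p) {x₁ x₂ y : E}
    (h : ¬SameRay ℝ (x₁ - y) (x₂ - y)) {a b : ℝ} (ha : 0 < a) (hb : 0 < b) (hab : a + b = 1) :
    ‖a • x₁ + b • x₂ - y‖ ^ p < a * ‖x₁ - y‖ ^ p + b * ‖x₂ - y‖ ^ p := by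
  have hnorm : ‖a • x₁ + b • x₂ - y‖ < a * ‖x₁ - y‖ + b * ‖x₂ - y‖ := by
    rw [smul_add_smul_sub_eq hab]
    refine (norm_add_lt_of_not_sameRay fun hr => h ?_).trans_eq ?_
    · have := (hr.nonneg_smul_left (inv_nonneg.2 ha.le)).nonneg_smul_right (inv_nonneg.2 hb.le)
      rwa [inv_smul_smul₀ ha.ne', inv_smul_smul₀ hb.ne'] at this
    · rw [norm_smul, norm_smul, Real.norm_of_nonneg ha.le, Real.norm_of_nonneg hb.le]
  calc ‖a • x₁ + b • x₂ - y‖ ^ p < (a * ‖x₁ - y‖ + b * ‖x₂ - y‖) ^ p :=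
        Real.rpow_lt_rpow (norm_nonneg _) hnorm (by linarith)
    _ ≤ a * ‖x₁ - y‖ ^ p + b * ‖x₂ - y‖ ^ p :=
        (convexOn_rpow hp).2 (norm_nonneg _) (norm_nonneg _) ha.le hb.le hab

end Norm

section Integral

lemma strictConvexOn_integral {E α : Type*} [AddCommGroup E] [Module ℝ E] [MeasurableSpace α]
    {μ : Measure α} {s : Set E} {f : E → α → ℝ} (hs : Convex ℝ s)
    (hint : ∀ x ∈ s, Integrable (f x) μ) (hconv : ∀ y, ConvexOn ℝ s (f · y))
    (hstrict : ∀ x₁ ∈ s, ∀ x₂ ∈ s, x₁ ≠ x₂ → ∀ a b : ℝ, 0 < a → 0 < b → a + b = 1 →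
      μ {y | f (a • x₁ + b • x₂) y < a * f x₁ y + b * f x₂ y} ≠ 0) :
    StrictConvexOn ℝ s (fun x => ∫ y, f x y ∂μ) := by
  refine ⟨hs, fun x₁ hx₁ x₂ hx₂ hne a b ha hb hab => ?_⟩
  have hx : a • x₁ + b • x₂ ∈ s := hs hx₁ hx₂ ha.le hb.le hab
  have hcomb : Integrable (fun y => a * f x₁ y + b * f x₂ y) μ :=
    ((hint x₁ hx₁).const_mul a).add ((hint x₂ hx₂).const_mul b)
  have hle : ∀ y, f (a • x₁ + b • x₂) y ≤ a * f x₁ y + b * f x₂ y :=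
    fun y => (hconv y).2 hx₁ hx₂ ha.le hb.le hab
  have hgap : 0 < ∫ y, (a * f x₁ y + b * f x₂ y - f (a • x₁ + b • x₂) y) ∂μ := by
    rw [integral_pos_iff_support_of_nonneg (fun y => sub_nonneg.2 (hle y))
      (hcomb.sub (hint _ hx)), pos_iff_ne_zero]
    refine fun h0 => hstrict x₁ hx₁ x₂ hx₂ hne a b ha hb hab (measure_mono_null ?_ h0)
    exact fun y hy => (sub_pos.2 hy).ne'
  rw [integral_sub hcomb (hint _ hx), integral_add ((hint x₁ hx₁).const_mul a)
    ((hint x₂ hx₂).const_mul b), integral_const_mul, integral_const_mul] at hgap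
  simp only [smul_eq_mul]
  linarith

variable {E : Type*} [NormedAddCommGroup E] [MeasurableSpace E] [BorelSpace E] (μ : Measure E)
  {K : Set E} {p : ℝ}

lemma integrableOn_norm_sub_rpow [IsFiniteMeasureOnCompacts μ] (hK : IsCompact K) (hp : 0 ≤ p)
    (x : E) : IntegrableOn (fun y => ‖x - y‖ ^ p) K μ :=
  ((Real.continuous_rpow_const hp).comp (continuous_const.sub continuous_id).norm).continuousOn
    |>.integrableOn_compact hK

variable [NormedSpace ℝ E] [FiniteDimensional ℝ E]

lemma continuous_setIntegral_norm_sub_rpow [IsFiniteMeasureOnCompacts μ] (hK : IsCompact K)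
    (hp : 0 ≤ p) : Continuous (fun x => ∫ y in K, ‖x - y‖ ^ p ∂μ) :=
  continuous_parametric_integral_of_continuous (f := fun x y : E => ‖x - y‖ ^ p)
    ((Real.continuous_rpow_const hp).comp (continuous_fst.sub continuous_snd).norm) hK

lemma tendsto_setIntegral_norm_sub_rpow_cocompact [IsFiniteMeasureOnCompacts μ] (hK : IsCompact K)
    (hμK : μ K ≠ 0) (hp : 0 < p) :
    Tendsto (fun x => ∫ y in K, ‖x - y‖ ^ p ∂μ) (cocompact E) atTop := by
  obtain ⟨R, hR⟩ := hK.isBounded.subset_closedBall 0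
  have hm : 0 < μ.real K := ENNReal.toReal_pos hμK hK.measure_lt_top.ne
  have hlim : Tendsto (fun x : E => (‖x‖ - R) ^ p * μ.real K) (cocompact E) atTop :=
    ((tendsto_rpow_atTop hp).comp
      (tendsto_atTop_add_const_right _ (-R) tendsto_norm_cocompact_atTop)).atTop_mul_const hm
  refine tendsto_atTop_mono' _ ?_ hlim
  filter_upwards [tendsto_norm_cocompact_atTop.eventually_ge_atTop R] with x hx
  have hle : ∀ y ∈ K, (‖x‖ - R) ^ p ≤ ‖x - y‖ ^ p := fun y hy => by
    refine Real.rpow_le_rpow (sub_nonneg.2 hx) ?_ hp.le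
    have := norm_sub_norm_le x y
    have := mem_closedBall_zero_iff.1 (hR hy)
    linarith
  simpa [setIntegral_const, mul_comm] using
    setIntegral_mono_on (integrableOn_const hK.measure_ne_top)
      (integrableOn_norm_sub_rpow μ hK hp.le x) hK.isClosed.measurableSet hle

lemma strictConvexOn_setIntegral_norm_sub_rpow [StrictConvexSpace ℝ E] [μ.IsAddHaarMeasure]
    (hE : 2 ≤ Module.finrank ℝ E) (hK : IsCompact K) (hμK : μ K ≠ 0) (hp : 1 ≤ p) :
    StrictConvexOn ℝ univ (fun x => ∫ y in K, ‖x - y‖ ^ p ∂μ) := by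
  refine strictConvexOn_integral convex_univ
    (fun x _ => integrableOn_norm_sub_rpow μ hK (by linarith) x)
    (convexOn_norm_sub_rpow hp) fun x₁ _ x₂ _ hne a b ha hb hab => ?_
  set L : Set E := (line[ℝ, x₁, x₂] : Set E)
  have hL : μ L = 0 := Measure.addHaar_affineSubspace μ _ (affineSpan_pair_ne_top hE x₁ x₂)
  have hLc : μ.restrict K Lᶜ = μ K := by
    rw [Measure.restrict_apply' hK.isClosed.measurableSet, ← sdiff_eq_compl_inter,
      measure_sdiff_null hL]
  refine fun h0 => hμK (hLc ▸ measure_mono_null (fun y hy => ?_) h0)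
  exact norm_smul_add_smul_sub_rpow_lt hp (fun hr => hy (mem_affineSpan_pair_of_sameRay_sub hr hne))
    ha hb hab

end Integral

lemma existsUnique_forall_le_of_strictConvexOn {E : Type*} [NormedAddCommGroup E]
    [NormedSpace ℝ E] [ProperSpace E] {F : E → ℝ} (hcont : Continuous F)
    (hcoer : Tendsto F (cocompact E) atTop) (hconv : StrictConvexOn ℝ univ F) :
    ∃! z, ∀ x, F z ≤ F x := by
  obtain ⟨z, hz⟩ := hcont.exists_forall_le hcoer
  exact ⟨z, hz, fun w hw => hconv.eq_of_isMinOn (fun x _ => hw x) (fun x _ => hz x) trivial trivial⟩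

theorem stmt_19 (n : ℕ) (hn : 2 ≤ n) (Ω : Set (EuclideanSpace ℝ (Fin n)))
    (hc : IsCompact Ω) (hint : (interior Ω).Nonempty) (α : ℝ) (hα : (n : ℝ) + 1 ≤ α) :
    ∃! z : EuclideanSpace ℝ (Fin n),
      ∀ x : EuclideanSpace ℝ (Fin n),
        (∫ y in Ω, ‖z - y‖ ^ (α - n)) ≤ (∫ y in Ω, ‖x - y‖ ^ (α - n)) := by
  have hp : 1 ≤ α - n := by linarith
  have hΩ : volume Ω ≠ 0 := (Measure.measure_pos_of_nonempty_interior _ hint).ne'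
  have hE : 2 ≤ Module.finrank ℝ (EuclideanSpace ℝ (Fin n)) := by
    rwa [finrank_euclideanSpace_fin]
  exact existsUnique_forall_le_of_strictConvexOn
    (continuous_setIntegral_norm_sub_rpow volume hc (by linarith))
    (tendsto_setIntegral_norm_sub_rpow_cocompact volume hc hΩ (by linarith))
    (strictConvexOn_setIntegral_norm_sub_rpow volume hE hc hΩ hp)
end
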